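/- Let p ≥ 3 and b = span{h, e}, [h,e] = 2e over a field of characteristic p. For 0 ≤ n ≤ p-1, the b-module S̄^n(b) (adjoint action) is isomorphic to L(n) ⊗ (weight -n), where L(n) is the (n+1)-dimensional restricted simple sl_2-module of highest weight n restricted to b: concretely, S̄^n(b) has basis h^i e^j (i+j = n) with h-weights -2j for j = 0, ..., n, i.e., weights -2n, -2n+2, ..., 0, matching the weights of L(n) shifted by -n, and the operator ad(e) acts injectively on each nonzero weight space except the lowest. -/

import Mathlib

/-!
With `h = X 0` and `e = X 1`, the degree-`n` component has basis `h^(n-j) e^j`, `0 ≤ j ≤ n`.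
`ad h = -2 e ∂_e` is diagonal on it with eigenvalue `-2j`, and `ad e = -2 e ∂_h` sends
`h^(n-j) e^j` to `-2(n-j) h^(n-j-1) e^(j+1)`. Rescaling the `j`-th basis vector by
`(-2)^(n-j) (n-j)!` turns `ad e` into the shift `v_j ↦ v_{j+1}` of `L(n) ⊗ (-n)`; these scalars,
and the factors `-2(n-j)`, are nonzero because `2` and every `m ≤ n` are invertible when
`p > max 2 n`.
-/

open MvPolynomial

/-- The adjoint action of `e` on `S̄(b)` (`X 0 = h`, `X 1 = e`):
`ad(e)(h^i e^j) = -2i h^{i-1} e^{j+1}`. -/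
noncomputable def adE (k : Type*) [Field k] :
    MvPolynomial (Fin 2) k →ₗ[k] MvPolynomial (Fin 2) k :=
  (-2 : k) • ((LinearMap.mulLeft k (X 1 : MvPolynomial (Fin 2) k)).comp
    (pderiv (0 : Fin 2)).toLinearMap)

/-- The adjoint action of `h` on `S̄(b)` (paper convention):
`ad(h)(h^i e^j) = -2j h^i e^j`. -/
noncomputable def adH (k : Type*) [Field k] :
    MvPolynomial (Fin 2) k →ₗ[k] MvPolynomial (Fin 2) k :=
  (-2 : k) • ((LinearMap.mulLeft k (X 1 : MvPolynomial (Fin 2) k)).comp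
    (pderiv (1 : Fin 2)).toLinearMap)

/-- Model of `L(n) ⊗ (-n)`: the `h`-action on the `(n+1)`-dimensional space with basis
`v_0, …, v_n`, where `v_j` has weight `-2j`. -/
noncomputable def modelH (k : Type*) [Field k] (n : ℕ) :
    (Fin (n + 1) → k) →ₗ[k] (Fin (n + 1) → k) :=
  LinearMap.pi fun j => (((-2 : ℤ) * ((j : ℕ) : ℤ) : ℤ) : k) • LinearMap.proj j

/-- Model of `L(n) ⊗ (-n)`: the `e`-action raising the weight by `2`, `v_j ↦ v_{j+1}`,
injective except on the lowest weight vector `v_n`. -/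
noncomputable def modelE (k : Type*) [Field k] (n : ℕ) :
    (Fin (n + 1) → k) →ₗ[k] (Fin (n + 1) → k) :=
  LinearMap.pi fun j => if (j : ℕ) = 0 then 0 else LinearMap.proj (j - 1)

open Nat

section
variable {k : Type*} [Field k]

/-- The exponent of the monomial `h^i e^j`. -/
noncomputable def bideg (i j : ℕ) : Fin 2 →₀ ℕ := Finsupp.single 0 i + Finsupp.single 1 j

@[simp] lemma bideg_apply_zero (i j : ℕ) : bideg i j 0 = i := by simp [bideg]

@[simp] lemma bideg_apply_one (i j : ℕ) : bideg i j 1 = j := by simp [bideg]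

lemma degree_bideg (i j : ℕ) : (bideg i j).degree = i + j := by
  simp [Finsupp.degree_eq_sum, Fin.sum_univ_two]

lemma eq_bideg (m : Fin 2 →₀ ℕ) : m = bideg (m 0) (m 1) := by
  ext a; fin_cases a <;> simp

lemma single_one_add_bideg (i j : ℕ) : Finsupp.single 1 1 + bideg i j = bideg i (j + 1) := by
  rw [bideg, bideg, Finsupp.single_add]; abel

lemma bideg_add_single_zero (i j : ℕ) : bideg i j + Finsupp.single 0 1 = bideg (i + 1) j := by
  rw [bideg, bideg, Finsupp.single_add]; abel

lemma bideg_add_single_one (i j : ℕ) : bideg i j + Finsupp.single 1 1 = bideg i (j + 1) := by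
  rw [add_comm, single_one_add_bideg]

lemma X_pow_mul_X_pow (i j : ℕ) :
    (X 0 ^ i * X 1 ^ j : MvPolynomial (Fin 2) k) = monomial (bideg i j) 1 := by
  rw [X_pow_eq_monomial, X_pow_eq_monomial, monomial_mul, mul_one, bideg]

lemma adE_apply (f : MvPolynomial (Fin 2) k) : adE k f = (-2 : k) • (X 1 * pderiv 0 f) := rfl

lemma adH_apply (f : MvPolynomial (Fin 2) k) : adH k f = (-2 : k) • (X 1 * pderiv 1 f) := rfl

lemma coeff_bideg_zero_X_one_mul (g : MvPolynomial (Fin 2) k) (i : ℕ) :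
    coeff (bideg i 0) (X 1 * g) = 0 := by
  rw [coeff_X_mul', if_neg (by simp)]

lemma coeff_bideg_succ_X_one_mul (g : MvPolynomial (Fin 2) k) (i j : ℕ) :
    coeff (bideg i (j + 1)) (X 1 * g) = coeff (bideg i j) g := by
  rw [← single_one_add_bideg, coeff_X_mul]

lemma coeff_adE_bideg_zero (f : MvPolynomial (Fin 2) k) (i : ℕ) :
    coeff (bideg i 0) (adE k f) = 0 := by
  rw [adE_apply, coeff_smul, coeff_bideg_zero_X_one_mul, smul_zero]

lemma coeff_adE_bideg_succ (f : MvPolynomial (Fin 2) k) (i j : ℕ) :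
    coeff (bideg i (j + 1)) (adE k f) = -2 * ((i + 1 : ℕ) : k) * coeff (bideg (i + 1) j) f := by
  rw [adE_apply, coeff_smul, coeff_bideg_succ_X_one_mul, coeff_pderiv, bideg_add_single_zero,
    bideg_apply_zero, smul_eq_mul]
  push_cast; ring

lemma coeff_adH_bideg (f : MvPolynomial (Fin 2) k) (i j : ℕ) :
    coeff (bideg i j) (adH k f) = -2 * (j : k) * coeff (bideg i j) f := by
  rw [adH_apply, coeff_smul, smul_eq_mul]
  cases j with
  | zero => rw [coeff_bideg_zero_X_one_mul]; simp
  | succ j =>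
    rw [coeff_bideg_succ_X_one_mul, coeff_pderiv, bideg_add_single_one, bideg_apply_one]
    push_cast; ring

lemma adH_monomial (s : Fin 2 →₀ ℕ) (a : k) :
    adH k (monomial s a) = (-2 * (s 1 : k)) • monomial s a := by
  ext m
  obtain ⟨i, j, rfl⟩ : ∃ i j, m = bideg i j := ⟨_, _, eq_bideg m⟩
  simp only [coeff_adH_bideg, coeff_smul, coeff_monomial, smul_eq_mul]
  split_ifs with h
  · rw [h, bideg_apply_one]
  · simp

lemma adE_X_pow_mul_ne_zero (h2 : (2 : k) ≠ 0) {i : ℕ} (hi : (i : k) ≠ 0) (j : ℕ) :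
    adE k (X 0 ^ i * X 1 ^ j) ≠ 0 := by
  obtain ⟨i, rfl⟩ := Nat.exists_eq_add_one_of_ne_zero (n := i) fun h => by
    rw [h, cast_zero] at hi; exact hi rfl
  intro h
  have hcoeff := congrArg (coeff (bideg i (j + 1))) h
  rw [X_pow_mul_X_pow, coeff_adE_bideg_succ, coeff_monomial, if_pos rfl, mul_one,
    coeff_zero] at hcoeff
  exact mul_ne_zero (neg_ne_zero.mpr h2) hi hcoeff

/-- `(ad e)^i (h^i) = adEScale i • e^i`. -/
def adEScale (i : ℕ) : k := (-2 : k) ^ i * (i ! : k)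

lemma adEScale_succ (i : ℕ) : adEScale i * (-2 * ((i + 1 : ℕ) : k)) = adEScale (i + 1) := by
  rw [adEScale, adEScale, pow_succ, factorial_succ]; push_cast; ring

lemma adEScale_ne_zero (h2 : (2 : k) ≠ 0) {n i : ℕ} (hn : (n ! : k) ≠ 0) (hi : i ≤ n) :
    (adEScale i : k) ≠ 0 :=
  mul_ne_zero (pow_ne_zero _ (neg_ne_zero.mpr h2))
    (ne_zero_of_dvd_ne_zero hn (Nat.cast_dvd_cast (factorial_dvd_factorial hi)))

variable (k) in
noncomputable def weightCoords (n : ℕ) : MvPolynomial (Fin 2) k →ₗ[k] (Fin (n + 1) → k) :=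
  LinearMap.pi fun j => (adEScale (n - j) : k) • lcoeff k (bideg (n - j) j)

lemma weightCoords_apply (n : ℕ) (f : MvPolynomial (Fin 2) k) (j : Fin (n + 1)) :
    weightCoords k n f j = adEScale (n - j) * coeff (bideg (n - j) j) f := rfl

lemma modelE_apply_zero (n : ℕ) (v : Fin (n + 1) → k) : modelE k n v 0 = 0 := by
  simp [modelE]

lemma modelE_apply_succ (n : ℕ) (v : Fin (n + 1) → k) (j : Fin n) :
    modelE k n v j.succ = v j.castSucc := by
  simp only [modelE, LinearMap.pi_apply, Fin.val_succ, Nat.add_one_ne_zero, if_false,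
    LinearMap.proj_apply]
  congr 1
  ext
  simp [Fin.coe_sub_one, Fin.succ_ne_zero]

lemma weightCoords_adE (n : ℕ) (f : MvPolynomial (Fin 2) k) :
    weightCoords k n (adE k f) = modelE k n (weightCoords k n f) := by
  funext j
  induction j using Fin.cases with
  | zero =>
    rw [modelE_apply_zero, weightCoords_apply, Fin.val_zero, coeff_adE_bideg_zero, mul_zero]
  | succ j =>
    obtain ⟨i, hi⟩ : ∃ i, n - j = i + 1 := ⟨n - (j + 1), by omega⟩
    rw [modelE_apply_succ, weightCoords_apply, weightCoords_apply, Fin.val_succ,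
      Fin.val_castSucc, show n - (j + 1) = i by omega, coeff_adE_bideg_succ, hi,
      ← adEScale_succ]
    ring

lemma weightCoords_adH (n : ℕ) (f : MvPolynomial (Fin 2) k) :
    weightCoords k n (adH k f) = modelH k n (weightCoords k n f) := by
  funext j
  simp only [weightCoords_apply, coeff_adH_bideg, modelH, LinearMap.pi_apply,
    LinearMap.smul_apply, LinearMap.proj_apply, smul_eq_mul]
  push_cast; ring

lemma eq_zero_of_weightCoords_eq_zero (h2 : (2 : k) ≠ 0) {n : ℕ} (hn : (n ! : k) ≠ 0)
    {f : MvPolynomial (Fin 2) k} (hf : f.IsHomogeneous n) (h : weightCoords k n f = 0) :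
    f = 0 := by
  rw [eq_zero_iff]
  intro m
  by_contra hm
  have hdeg : m 0 + m 1 = n := by
    by_contra hne
    exact hm (hf.coeff_eq_zero (by rwa [eq_bideg m, degree_bideg]))
  have hcoord := congrFun h ⟨m 1, by omega⟩
  rw [weightCoords_apply, Pi.zero_apply, show n - m 1 = m 0 by omega, ← eq_bideg] at hcoord
  exact mul_ne_zero (adEScale_ne_zero h2 hn (by omega)) hm hcoord

lemma exists_mem_homogeneousSubmodule_weightCoords_eq (h2 : (2 : k) ≠ 0) {n : ℕ}
    (hn : (n ! : k) ≠ 0) (v : Fin (n + 1) → k) :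
    ∃ f ∈ homogeneousSubmodule (Fin 2) k n, weightCoords k n f = v := by
  refine ⟨∑ j : Fin (n + 1), monomial (bideg (n - j) j) ((adEScale (n - j))⁻¹ * v j),
    Submodule.sum_mem _ fun j _ => ?_, funext fun j => ?_⟩
  · exact isHomogeneous_monomial _ (by rw [degree_bideg]; omega)
  · have hinj (j' : Fin (n + 1)) : bideg (n - j') j' = bideg (n - j) j ↔ j' = j :=
      ⟨fun h => Fin.ext (by simpa using congrArg (· 1) h), fun h => h ▸ rfl⟩
    simp only [weightCoords_apply, coeff_sum, coeff_monomial, hinj, Finset.sum_ite_eq',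
      Finset.mem_univ, if_true]
    rw [← mul_assoc, mul_inv_cancel₀ (adEScale_ne_zero h2 hn (Nat.sub_le n j)), one_mul]

end

/-- For `0 ≤ n ≤ p - 1`, the `b`-module `S̄ⁿ(b)` (adjoint action; for `n ≤ p - 1` it is the
full degree-`n` homogeneous component) is isomorphic to `L(n) ⊗ (-n)`: the monomials
`h^i e^j`, `i + j = n`, have `h`-weights `-2j` (i.e. `-2n, -2n+2, …, 0`), `ad(e)` acts
injectively on each weight space except the lowest, and there is a linear bijection of the
degree-`n` component with the model of `L(n) ⊗ (-n)` intertwining the actions of `e`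
and `h`. -/
theorem hochschild_stmt18 (k : Type*) [Field k] (p : ℕ) [CharP k p] (hp : p.Prime)
    (h3 : 3 ≤ p) (n : ℕ) (hn : n ≤ p - 1) :
    (∀ i j : ℕ, i + j = n → adH k (X 0 ^ i * X 1 ^ j) =
      (((-2 : ℤ) * (j : ℤ) : ℤ) : k) • ((X 0 : MvPolynomial (Fin 2) k) ^ i * X 1 ^ j)) ∧
    (∀ j < n, adE k ((X 0 : MvPolynomial (Fin 2) k) ^ (n - j) * X 1 ^ j) ≠ 0) ∧
    ∃ ψ : MvPolynomial (Fin 2) k →ₗ[k] (Fin (n + 1) → k),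
      (∀ f ∈ homogeneousSubmodule (Fin 2) k n, ψ (adE k f) = modelE k n (ψ f)) ∧
      (∀ f ∈ homogeneousSubmodule (Fin 2) k n, ψ (adH k f) = modelH k n (ψ f)) ∧
      (∀ f ∈ homogeneousSubmodule (Fin 2) k n, ψ f = 0 → f = 0) ∧
      (∀ v : Fin (n + 1) → k, ∃ f ∈ homogeneousSubmodule (Fin 2) k n, ψ f = v) := by
  have h2 : (2 : k) ≠ 0 := Ring.two_ne_zero (by rw [ringChar.eq k p]; omega)
  have hfact : (n ! : k) ≠ 0 := by
    rw [Ne, CharP.cast_eq_zero_iff k p, hp.dvd_factorial]; omega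
  refine ⟨fun i j _ => ?_, fun j hj => ?_, weightCoords k n, fun f _ => weightCoords_adE n f,
    fun f _ => weightCoords_adH n f, fun f hf => eq_zero_of_weightCoords_eq_zero h2 hfact hf,
    exists_mem_homogeneousSubmodule_weightCoords_eq h2 hfact⟩
  · rw [X_pow_mul_X_pow, adH_monomial, bideg_apply_one]
    push_cast
    rfl
  · exact adE_X_pow_mul_ne_zero h2 (ne_zero_of_dvd_ne_zero hfact
      (Nat.cast_dvd_cast (Nat.dvd_factorial (by omega) (Nat.sub_le n j)))) j
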